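/- arXiv:1707.06712 — 4 statements merged into one kernel-verified Lean document; each statement's English description precedes it below -/
import Mathlib

section
/- The convex hull of S^U = {(x,y) ∈ ℤ^n_+ × ℝ^n_+ : Σ_{i=1}^n x_i y_i ≥ r, x ≤ u} is a polyhedron, i.e., it can be written as the intersection of finitely many closed half-spaces. -/
/-!
A point `(x, y)` of `S^U` with `s = ∑ i, x i * y i ≥ r` is the centre of mass, with weights
`x j * y j`, of the finitely many points `(x, (r / x j) • e j)` of `S^U`, plus a nonnegative vector
in the `y`-directions; conversely `S^U` is stable under adding such vectors. Hence
`conv S^U = conv V + {0} × ℝⁿ₊` with `V` finite. By Fourier–Motzkin elimination, linear images of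
polyhedra in finite dimension are polyhedra, so `conv V` (an image of a simplex) and the Minkowski
sum (an image of a product) are polyhedra.
-/

open Finset Pointwise

section Polyhedron

variable {E F : Type*} [AddCommGroup E] [Module ℝ E] [AddCommGroup F] [Module ℝ F]

def IsPolyhedron (S : Set E) : Prop :=
  ∃ (m : ℕ) (a : Fin m → E →ₗ[ℝ] ℝ) (b : Fin m → ℝ), S = {p | ∀ k, a k p ≤ b k}

lemma isPolyhedron_setOf_forall_le {ι : Sort*} [Finite ι] (a : ι → E →ₗ[ℝ] ℝ) (b : ι → ℝ) :
    IsPolyhedron {p : E | ∀ k, a k p ≤ b k} := by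
  obtain ⟨m, ⟨e⟩⟩ := Finite.exists_equiv_fin ι
  refine ⟨m, a ∘ e.symm, b ∘ e.symm, ?_⟩
  ext p
  exact e.symm.forall_congr_right.symm

lemma isPolyhedron_halfspace (a : E →ₗ[ℝ] ℝ) (b : ℝ) : IsPolyhedron {p | a p ≤ b} := by
  simpa using isPolyhedron_setOf_forall_le (fun _ : Unit => a) (fun _ => b)

lemma isPolyhedron_hyperplane (a : E →ₗ[ℝ] ℝ) (b : ℝ) : IsPolyhedron {p | a p = b} := by
  convert isPolyhedron_setOf_forall_le (fun s : Bool => cond s a (-a)) (fun s => cond s b (-b))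
    using 1
  ext p
  simp only [Set.mem_ofPred_eq, Bool.forall_bool, cond_false, cond_true, LinearMap.neg_apply,
    neg_le_neg_iff]
  exact ⟨fun h => ⟨h.ge, h.le⟩, fun h => le_antisymm h.2 h.1⟩

lemma IsPolyhedron.iInter {ι : Sort*} [Finite ι] {S : ι → Set E}
    (hS : ∀ i, IsPolyhedron (S i)) : IsPolyhedron (⋂ i, S i) := by
  choose m a b hab using hS
  convert isPolyhedron_setOf_forall_le (fun k : Σ' i, Fin (m i) => a k.1 k.2) (fun k => b k.1 k.2)
  simp [hab, Set.ext_iff, PSigma.forall]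

lemma IsPolyhedron.inter {S T : Set E} (hS : IsPolyhedron S) (hT : IsPolyhedron T) :
    IsPolyhedron (S ∩ T) := by
  rw [Set.inter_eq_iInter]
  exact .iInter (Bool.forall_bool.2 ⟨hT, hS⟩)

lemma IsPolyhedron.preimage {S : Set F} (hS : IsPolyhedron S) (L : E →ₗ[ℝ] F) :
    IsPolyhedron (L ⁻¹' S) := by
  obtain ⟨m, a, b, rfl⟩ := hS
  exact ⟨m, fun k => (a k).comp L, b, rfl⟩

lemma IsPolyhedron.image_linearEquiv {S : Set E} (hS : IsPolyhedron S) (e : E ≃ₗ[ℝ] F) :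
    IsPolyhedron (e '' S) := by
  rw [e.image_eq_preimage_symm]
  exact hS.preimage e.symm.toLinearMap

lemma IsPolyhedron.prod {S : Set E} {T : Set F} (hS : IsPolyhedron S) (hT : IsPolyhedron T) :
    IsPolyhedron (S ×ˢ T) :=
  (hS.preimage (LinearMap.fst ℝ E F)).inter (hT.preimage (LinearMap.snd ℝ E F))

lemma isPolyhedron_zero [FiniteDimensional ℝ E] : IsPolyhedron ({0} : Set E) := by
  let b := Module.finBasis ℝ E
  convert IsPolyhedron.iInter fun i => isPolyhedron_hyperplane (b.coord i) 0
  ext p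
  rw [Set.mem_singleton_iff, ← b.forall_coord_eq_zero_iff]
  simp

lemma isPolyhedron_Ici_zero {ι : Type*} [Finite ι] : IsPolyhedron (Set.Ici (0 : ι → ℝ)) := by
  have : Set.Ici (0 : ι → ℝ) = ⋂ i, {p | (-(LinearMap.proj i : (ι → ℝ) →ₗ[ℝ] ℝ)) p ≤ 0} := by
    ext p
    simp [Pi.le_def]
  rw [this]
  exact .iInter fun i => isPolyhedron_halfspace _ _

lemma isPolyhedron_stdSimplex {ι : Type*} [Fintype ι] : IsPolyhedron (stdSimplex ℝ ι) := by
  have : stdSimplex ℝ ι = Set.Ici 0 ∩ {f | (∑ i, (LinearMap.proj i : (ι → ℝ) →ₗ[ℝ] ℝ)) f = 1} := by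
    ext f
    simp [stdSimplex, Pi.le_def]
  rw [this]
  exact isPolyhedron_Ici_zero.inter (isPolyhedron_hyperplane _ _)

lemma Set.Finite.nonempty_upperBounds_inter_lowerBounds {L U : Set ℝ} (hL : L.Finite)
    (hU : U.Finite) (h : ∀ a ∈ L, ∀ b ∈ U, a ≤ b) : (upperBounds L ∩ lowerBounds U).Nonempty := by
  rcases L.eq_empty_or_nonempty with rfl | hne
  · simpa [BddBelow] using hU.bddBelow
  · exact ⟨sSup L, fun a ha => le_csSup hL.bddAbove ha,
      fun b hb => csSup_le hne fun a ha => h a ha b hb⟩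

lemma exists_forall_mul_le_iff {ι : Type*} [Finite ι] (c d : ι → ℝ) :
    (∃ t, ∀ k, t * c k ≤ d k) ↔
      (∀ k, c k = 0 → 0 ≤ d k) ∧ ∀ k l, 0 < c k → c l < 0 → c l * d k ≤ c k * d l := by
  constructor
  · rintro ⟨t, ht⟩
    refine ⟨fun k hk => by simpa [hk] using ht k, fun k l hk hl => ?_⟩
    linarith [mul_le_mul_of_nonneg_left (ht k) (neg_nonneg.2 hl.le),
      mul_le_mul_of_nonneg_left (ht l) hk.le]
  · rintro ⟨hzero, hpair⟩
    obtain ⟨t, hlo, hup⟩ := Set.Finite.nonempty_upperBounds_inter_lowerBounds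
      ((Set.toFinite {l | c l < 0}).image fun l => d l / c l)
      ((Set.toFinite {k | 0 < c k}).image fun k => d k / c k)
      (by
        rintro _ ⟨l, hl, rfl⟩ _ ⟨k, hk, rfl⟩
        rw [div_le_iff_of_neg hl, div_mul_eq_mul_div, div_le_iff₀ hk]
        linarith [hpair k l hk hl])
    refine ⟨t, fun k => ?_⟩
    rcases lt_trichotomy (c k) 0 with hk | hk | hk
    · exact (div_le_iff_of_neg hk).1 (hlo ⟨k, hk, rfl⟩)
    · simpa [hk] using hzero k hk
    · exact (le_div_iff₀ hk).1 (hup ⟨k, hk, rfl⟩)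

lemma IsPolyhedron.image_snd_real {S : Set (ℝ × F)} (hS : IsPolyhedron S) :
    IsPolyhedron (Prod.snd '' S) := by
  obtain ⟨m, a, b, rfl⟩ := hS
  set c : Fin m → ℝ := fun k => a k (1, 0)
  set g : Fin m → F →ₗ[ℝ] ℝ := fun k => (a k).comp (LinearMap.inr ℝ ℝ F)
  have ha : ∀ k t x, a k (t, x) = t * c k + g k x := fun k t x => by
    rw [show (t, x) = t • ((1 : ℝ), (0 : F)) + ((0 : ℝ), x) by simp, map_add, map_smul,
      smul_eq_mul]
    rfl
  have hproj : Prod.snd '' {p | ∀ k, a k p ≤ b k} =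
      {x | ∃ t, ∀ k, t * c k ≤ b k - g k x} := by
    ext x
    simp only [Set.mem_image, Prod.exists, exists_eq_right, Set.mem_ofPred_eq,
      ha, le_sub_iff_add_le]
  simp_rw [hproj, exists_forall_mul_le_iff, Set.ofPred_and, Set.ofPred_forall]
  refine .inter (.iInter fun k => .iInter fun _ => ?_)
    (.iInter fun k => .iInter fun l => .iInter fun _ => .iInter fun _ => ?_)
  · simpa using isPolyhedron_halfspace (g k) (b k)
  · convert isPolyhedron_halfspace (c k • g l - c l • g k) (c k * b l - c l * b k) using 1
    ext x
    simp only [Set.mem_ofPred_eq, LinearMap.sub_apply, LinearMap.smul_apply, smul_eq_mul]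
    constructor <;> intro <;> linarith

lemma IsPolyhedron.image_snd_fin {d : ℕ} {S : Set ((Fin d → ℝ) × F)} (hS : IsPolyhedron S) :
    IsPolyhedron (Prod.snd '' S) := by
  induction d with
  | zero =>
    convert hS.preimage (LinearMap.inr ℝ (Fin 0 → ℝ) F) using 1
    ext x
    constructor
    · rintro ⟨⟨w, x⟩, hw, rfl⟩
      rwa [Subsingleton.elim w 0] at hw
    · exact fun hx => ⟨(0, x), hx, rfl⟩
  | succ d ih =>
    let e := ((Fin.consLinearEquiv ℝ fun _ => ℝ).symm.prodCongr (LinearEquiv.refl ℝ F)).trans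
        (LinearEquiv.prodAssoc ℝ ℝ (Fin d → ℝ) F)
    convert ih (hS.image_linearEquiv e).image_snd_real using 1
    rw [Set.image_image, Set.image_image]
    rfl

lemma IsPolyhedron.image_snd [FiniteDimensional ℝ E] {S : Set (E × F)} (hS : IsPolyhedron S) :
    IsPolyhedron (Prod.snd '' S) := by
  let e := (Module.finBasis ℝ E).equivFun.prodCongr (LinearEquiv.refl ℝ F)
  convert (hS.image_linearEquiv e).image_snd_fin using 1
  rw [Set.image_image]
  rfl

lemma IsPolyhedron.image [FiniteDimensional ℝ E] [FiniteDimensional ℝ F] {S : Set E}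
    (hS : IsPolyhedron S) (L : E →ₗ[ℝ] F) : IsPolyhedron (L '' S) := by
  have hgraph : IsPolyhedron {q : E × F | q.1 ∈ S ∧ q.2 = L q.1} := by
    convert (hS.preimage (LinearMap.fst ℝ E F)).inter
      (isPolyhedron_zero.preimage (LinearMap.snd ℝ E F - L ∘ₗ LinearMap.fst ℝ E F)) using 1
    ext q
    simp [sub_eq_zero]
  convert hgraph.image_snd using 1
  ext y
  simp [eq_comm]

lemma IsPolyhedron.add [FiniteDimensional ℝ E] {S T : Set E} (hS : IsPolyhedron S)
    (hT : IsPolyhedron T) : IsPolyhedron (S + T) := by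
  rw [← Set.image2_add, ← Set.image_prod]
  exact (hS.prod hT).image (LinearMap.fst ℝ E E + LinearMap.snd ℝ E E)

lemma Set.Finite.isPolyhedron_convexHull [FiniteDimensional ℝ E] {s : Set E} (hs : s.Finite) :
    IsPolyhedron (convexHull ℝ s) := by
  let := hs.fintype
  rw [hs.convexHull_eq_image]
  exact isPolyhedron_stdSimplex.image _

end Polyhedron

section BilinearCovering

variable {n : ℕ}

def bilinearCoveringSet (r : ℝ) (u : Fin n → ℕ) : Set ((Fin n → ℝ) × (Fin n → ℝ)) :=
  {p | (∀ i, ∃ m : ℕ, p.1 i = (m : ℝ)) ∧ (∀ i, 0 ≤ p.2 i) ∧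
    (∀ i, p.1 i ≤ (u i : ℝ)) ∧ r ≤ ∑ i, p.1 i * p.2 i}

noncomputable def coveringVertex (r : ℝ) (x : Fin n → ℕ) (j : Fin n) : (Fin n → ℝ) × (Fin n → ℝ) :=
  (fun i => (x i : ℝ), Pi.single j (r / x j))

def coveringVertices (r : ℝ) (u : Fin n → ℕ) : Set ((Fin n → ℝ) × (Fin n → ℝ)) :=
  (fun q : (Fin n → ℕ) × Fin n => coveringVertex r q.1 q.2) '' {q | q.1 ≤ u ∧ q.1 q.2 ≠ 0}

lemma coveringVertices_finite (r : ℝ) (u : Fin n → ℕ) : (coveringVertices r u).Finite :=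
  (((Set.finite_Iic u).prod Set.finite_univ).subset fun _ hq => ⟨hq.1, trivial⟩).image _

lemma coveringVertex_mem {r : ℝ} (hr : 0 ≤ r) {u x : Fin n → ℕ} {j : Fin n} (hxu : x ≤ u)
    (hxj : x j ≠ 0) : coveringVertex r x j ∈ bilinearCoveringSet r u := by
  refine ⟨fun i => ⟨x i, rfl⟩, fun i => ?_, fun i => by simpa [coveringVertex] using hxu i, ?_⟩
  · rcases eq_or_ne i j with rfl | hij
    · simpa [coveringVertex] using div_nonneg hr (Nat.cast_nonneg _)
    · simp [coveringVertex, hij]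
  · simp [coveringVertex, Pi.single_apply, mul_div_cancel₀ r (Nat.cast_ne_zero.2 hxj)]

lemma bilinearCoveringSet_add_subset (r : ℝ) (u : Fin n → ℕ) :
    bilinearCoveringSet r u + ({0} : Set (Fin n → ℝ)) ×ˢ Set.Ici 0 ⊆ bilinearCoveringSet r u := by
  rintro _ ⟨p, ⟨hint, hy, hxu, hr⟩, q, ⟨hq₁, hq₂⟩, rfl⟩
  simp only [Set.mem_singleton_iff, Set.mem_Ici] at hq₁ hq₂
  have hx : ∀ i, 0 ≤ p.1 i := fun i => by obtain ⟨m, hm⟩ := hint i; simp [hm]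
  refine ⟨by simpa [hq₁] using hint, fun i => add_nonneg (hy i) (hq₂ i),
    by simpa [hq₁] using hxu, hr.trans (sum_le_sum fun i _ => ?_)⟩
  simpa [hq₁, mul_add] using mul_nonneg (hx i) (hq₂ i)

lemma sum_smul_coveringVertex (r : ℝ) (x : Fin n → ℕ) (w : Fin n → ℝ) :
    ∑ j, w j • coveringVertex r x j =
      ((∑ j, w j) • fun i => (x i : ℝ), fun i => w i * (r / x i)) := by
  ext i
  · simp [coveringVertex, Prod.fst_sum, Finset.sum_apply, Finset.sum_mul]
  · simp [coveringVertex, Prod.snd_sum, Finset.sum_apply, Pi.single_apply]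
lemma mem_convexHull_coveringVertices_add {r : ℝ} (hr : 0 < r) {u : Fin n → ℕ}
    {p : (Fin n → ℝ) × (Fin n → ℝ)} (hp : p ∈ bilinearCoveringSet r u) :
    p ∈ convexHull ℝ (coveringVertices r u) + ({0} : Set (Fin n → ℝ)) ×ˢ Set.Ici 0 := by
  obtain ⟨⟨x, y⟩, ⟨hint, hy, hxu, hrs⟩⟩ := p, hp
  choose m hm using hint
  obtain rfl : x = fun i => (m i : ℝ) := funext hm
  dsimp only at hy hxu hrs ⊢
  set w : Fin n → ℝ := fun j => m j * y j
  have hw : ∀ j, 0 ≤ w j := fun j => mul_nonneg (Nat.cast_nonneg _) (hy j)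
  have hs : 0 < ∑ j, w j := hr.trans_le hrs
  have hmu : m ≤ u := fun i => by exact_mod_cast hxu i
  have hc : univ.centerMass w (coveringVertex r m) ∈ convexHull ℝ (coveringVertices r u) := by
    rw [← univ.centerMass_filter_ne_zero]
    refine centerMass_mem_convexHull _ (fun j _ => hw j) (by rwa [sum_filter_ne_zero])
      fun j hj => ?_
    simp only [mem_filter, mem_univ, true_and, w, mul_ne_zero_iff, Nat.cast_ne_zero] at hj
    exact ⟨(m, j), ⟨hmu, hj.1⟩, rfl⟩
  refine ⟨_, hc, _, ⟨?_, fun i => ?_⟩, add_sub_cancel _ _⟩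
  · simp [centerMass, sum_smul_coveringVertex, smul_smul, inv_mul_cancel₀ hs.ne']
  · have hmr : (m i : ℝ) * (r / m i) ≤ r := by
      rcases eq_or_ne (m i : ℝ) 0 with h | h
      · simpa [h] using hr.le
      · rw [mul_div_cancel₀ r h]
    have : (∑ j, w j)⁻¹ * (w i * (r / m i)) ≤ y i := by
      rw [inv_mul_le_iff₀ hs]
      calc w i * (r / m i) = y i * (m i * (r / m i)) := by ring
        _ ≤ y i * r := mul_le_mul_of_nonneg_left hmr (hy i)
        _ ≤ y i * ∑ j, w j := mul_le_mul_of_nonneg_left hrs (hy i)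
        _ = (∑ j, w j) * y i := mul_comm _ _
    simpa [centerMass, sum_smul_coveringVertex] using this

lemma convexHull_bilinearCoveringSet {r : ℝ} (hr : 0 < r) (u : Fin n → ℕ) :
    convexHull ℝ (bilinearCoveringSet r u) =
      convexHull ℝ (coveringVertices r u) + ({0} : Set (Fin n → ℝ)) ×ˢ Set.Ici 0 := by
  have hcone : Convex ℝ (({0} : Set (Fin n → ℝ)) ×ˢ Set.Ici (0 : Fin n → ℝ)) :=
    (convex_singleton 0).prod (convex_Ici 0)
  refine (convexHull_min (fun p => mem_convexHull_coveringVertices_add hr)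
    ((convex_convexHull ℝ _).add hcone)).antisymm ?_
  rw [← hcone.convexHull_eq, ← convexHull_add]
  refine convexHull_mono ((Set.add_subset_add_right ?_).trans (bilinearCoveringSet_add_subset r u))
  rintro _ ⟨q, ⟨hqu, hq⟩, rfl⟩
  exact coveringVertex_mem hr.le hqu hq

lemma isPolyhedron_convexHull_bilinearCoveringSet {r : ℝ} (hr : 0 < r) (u : Fin n → ℕ) :
    IsPolyhedron (convexHull ℝ (bilinearCoveringSet r u)) := by
  rw [convexHull_bilinearCoveringSet hr]
  exact (coveringVertices_finite r u).isPolyhedron_convexHull.add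
    (isPolyhedron_zero.prod isPolyhedron_Ici_zero)

end BilinearCovering

theorem stmt_5_general (n : ℕ) (r : ℝ) (hr : 0 < r)
    (u : Fin n → ℕ)
    (SU : Set ((Fin n → ℝ) × (Fin n → ℝ)))
    (hSU : SU = {p | (∀ i, ∃ m : ℕ, p.1 i = (m : ℝ)) ∧ (∀ i, 0 ≤ p.2 i) ∧
      (∀ i, p.1 i ≤ (u i : ℝ)) ∧ r ≤ ∑ i, p.1 i * p.2 i}) :
    ∃ (m : ℕ) (a : Fin m → ((Fin n → ℝ) × (Fin n → ℝ)) →ₗ[ℝ] ℝ) (b : Fin m → ℝ),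
      convexHull ℝ SU = {p | ∀ k, a k p ≤ b k} := by
  subst hSU
  exact isPolyhedron_convexHull_bilinearCoveringSet hr u

theorem stmt_5 (n : ℕ) (hn : 1 ≤ n) (r : ℝ) (hr : 0 < r)
    (u : Fin n → ℕ) (hu : ∀ i, 1 ≤ u i)
    (SU : Set ((Fin n → ℝ) × (Fin n → ℝ)))
    (hSU : SU = {p | (∀ i, ∃ m : ℕ, p.1 i = (m : ℝ)) ∧ (∀ i, 0 ≤ p.2 i) ∧
      (∀ i, p.1 i ≤ (u i : ℝ)) ∧ r ≤ ∑ i, p.1 i * p.2 i}) :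
    ∃ (m : ℕ) (a : Fin m → ((Fin n → ℝ) × (Fin n → ℝ)) →ₗ[ℝ] ℝ) (b : Fin m → ℝ),
      convexHull ℝ SU = {p | ∀ k, a k p ≤ b k} :=
  stmt_5_general n r hr u SU hSU
end

section
/- Every extreme point (x̄, ȳ) of conv(S^U) has the form: there is an index t and an integer p_t ∈ {1,...,u_t} with x̄_t = p_t, ȳ_t = r/p_t, and for all j ≠ t, x̄_j ∈ {0, u_j} and ȳ_j = 0. -/
/-!
An extreme point of `conv S^U` lies in `S^U`, and no segment of `S^U` may have it as midpoint.
Perturbing `y` alone shows that `y` has a single positive coordinate `t`, that `x_t > 0` and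
that `x_t y_t = r` (otherwise `y_t` could move in both directions). For `j ≠ t` we have
`y_j = 0`, so `x_j` does not enter `x ⬝ᵥ y` and an integer value strictly between `0` and `u_j`
could be moved by `±1`.
-/

open Matrix

theorem eq_zero_of_add_mem_of_sub_mem_of_mem_extremePoints {𝕜 E : Type*} [Field 𝕜]
    [LinearOrder 𝕜] [IsStrictOrderedRing 𝕜] [AddCommGroup E] [Module 𝕜 E] {A : Set E} {p v : E}
    (hp : p ∈ A.extremePoints 𝕜) (hadd : p + v ∈ A) (hsub : p - v ∈ A) : v = 0 := by
  have hmid : p ∈ openSegment 𝕜 (p + v) (p - v) :=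
    ⟨1 / 2, 1 / 2, by norm_num, by norm_num, by norm_num, by module⟩
  simpa using (mem_extremePoints.1 hp).2 _ hadd _ hsub hmid

/-- The set `S^U`; the integer vector `x` is stored as a real vector with natural coordinates. -/
def bilinearCoverSet {ι : Type*} [Fintype ι] (r : ℝ) (u : ι → ℕ) : Set ((ι → ℝ) × (ι → ℝ)) :=
  {p | (∀ i, ∃ m : ℕ, p.1 i = m) ∧ (∀ i, 0 ≤ p.2 i) ∧ (∀ i, p.1 i ≤ u i) ∧ r ≤ p.1 ⬝ᵥ p.2}

namespace bilinearCoverSet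

variable {ι : Type*} [Fintype ι] {r : ℝ} {u : ι → ℕ} {x y : ι → ℝ}

theorem mem_iff : (x, y) ∈ bilinearCoverSet r u ↔
    (∀ i, ∃ m : ℕ, x i = m) ∧ (∀ i, 0 ≤ y i) ∧ (∀ i, x i ≤ u i) ∧ r ≤ x ⬝ᵥ y :=
  Iff.rfl

theorem fst_nonneg (h : (x, y) ∈ bilinearCoverSet r u) (i : ι) : 0 ≤ x i := by
  obtain ⟨m, hm : x i = m⟩ := h.1 i
  exact hm ▸ m.cast_nonneg

theorem add_snd_mem {w : ι → ℝ} (h : (x, y) ∈ bilinearCoverSet r u) (hw : ∀ i, -w i ≤ y i)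
    (hr : r ≤ x ⬝ᵥ y + x ⬝ᵥ w) : (x, y + w) ∈ bilinearCoverSet r u :=
  ⟨h.1, fun i => by simpa [neg_le_iff_add_nonneg] using hw i, h.2.2.1, by rwa [dotProduct_add]⟩

theorem add_fst_single_mem [DecidableEq ι] {j : ι} {c : ℝ} (h : (x, y) ∈ bilinearCoverSet r u)
    (hy : y j = 0) (hint : ∃ m : ℕ, x j + c = m) (hu : x j + c ≤ u j) :
    (x + Pi.single j c, y) ∈ bilinearCoverSet r u := by
  refine ⟨fun i => ?_, h.2.1, fun i => ?_, ?_⟩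
  · rcases eq_or_ne i j with rfl | hij
    · simpa using hint
    · simpa [hij] using h.1 i
  · rcases eq_or_ne i j with rfl | hij
    · simpa using hu
    · simpa [hij] using h.2.2.1 i
  · simpa [add_dotProduct, hy] using h.2.2.2

/-- The hypotheses on `w` say exactly that `(x, y + w)` and `(x, y - w)` both lie in `S^U`. -/
theorem eq_zero_of_abs_le_snd (hp : (x, y) ∈ (convexHull ℝ (bilinearCoverSet r u)).extremePoints ℝ)
    {w : ι → ℝ} (hw : ∀ i, |w i| ≤ y i) (hr : |x ⬝ᵥ w| ≤ x ⬝ᵥ y - r) : w = 0 := by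
  have h := extremePoints_convexHull_subset hp
  obtain ⟨hr₁, hr₂⟩ := abs_le.1 hr
  have hadd : (x, y) + (0, w) ∈ bilinearCoverSet r u := by
    simpa using add_snd_mem h (fun i => by linarith [neg_abs_le (w i), hw i]) (by linarith)
  have hsub : (x, y) - (0, w) ∈ bilinearCoverSet r u := by
    simpa [sub_eq_add_neg] using add_snd_mem h (w := -w)
      (fun i => by simp only [Pi.neg_apply, neg_neg]; linarith [le_abs_self (w i), hw i])
      (by rw [dotProduct_neg]; linarith)
  simpa using congrArg Prod.snd <| eq_zero_of_add_mem_of_sub_mem_of_mem_extremePoints hp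
    (subset_convexHull ℝ _ hadd) (subset_convexHull ℝ _ hsub)

theorem exists_snd_pos (hr : 0 < r) (h : (x, y) ∈ bilinearCoverSet r u) : ∃ t, 0 < y t := by
  obtain ⟨-, hy₀, -, hxy⟩ := mem_iff.1 h
  by_contra! hy
  have : x ⬝ᵥ y = 0 := Finset.sum_eq_zero fun i _ => by simp [le_antisymm (hy i) (hy₀ i)]
  linarith

variable [DecidableEq ι]

theorem snd_eq_zero_of_fst_eq_zero
    (hp : (x, y) ∈ (convexHull ℝ (bilinearCoverSet r u)).extremePoints ℝ) {j : ι}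
    (hx : x j = 0) : y j = 0 := by
  obtain ⟨-, hy₀, -, hxy⟩ := mem_iff.1 (extremePoints_convexHull_subset hp)
  have hw := eq_zero_of_abs_le_snd hp (w := Pi.single j (y j)) (fun i => ?_) ?_
  · simpa using congrFun hw j
  · rcases eq_or_ne i j with rfl | hij
    · simp [abs_of_nonneg (hy₀ i)]
    · simp [hij, hy₀ i]
  · simpa [dotProduct_single, hx] using hxy

theorem fst_pos_of_snd_pos
    (hp : (x, y) ∈ (convexHull ℝ (bilinearCoverSet r u)).extremePoints ℝ) {j : ι}
    (hy : 0 < y j) : 0 < x j :=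
  (fst_nonneg (extremePoints_convexHull_subset hp) j).lt_of_ne' fun hx =>
    hy.ne' (snd_eq_zero_of_fst_eq_zero hp hx)

theorem snd_eq_zero_of_ne
    (hp : (x, y) ∈ (convexHull ℝ (bilinearCoverSet r u)).extremePoints ℝ) {j t : ι}
    (ht : 0 < y t) (hjt : j ≠ t) : y j = 0 := by
  obtain ⟨-, hy₀, -, hxy⟩ := mem_iff.1 (extremePoints_convexHull_subset hp)
  by_contra hj
  have hyj : 0 < y j := (hy₀ j).lt_of_ne' hj
  have hxj := fst_pos_of_snd_pos hp hyj
  have hxt := fst_pos_of_snd_pos hp ht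
  set c := min (x j * y j) (x t * y t)
  have hc : 0 < c := lt_min (mul_pos hxj hyj) (mul_pos hxt ht)
  -- shift `c` units of `x ⬝ᵥ y` from coordinate `t` to coordinate `j`
  have hw := eq_zero_of_abs_le_snd hp
    (w := Pi.single j (c / x j) - Pi.single t (c / x t)) (fun i => ?_) ?_
  · have := congrFun hw j
    simp [hjt, hc.ne', hxj.ne'] at this
  · rcases eq_or_ne i j with rfl | hij
    · rw [Pi.sub_apply, Pi.single_eq_same, Pi.single_eq_of_ne hjt, sub_zero,
        abs_of_pos (by positivity), div_le_iff₀ hxj, mul_comm]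
      exact min_le_left _ _
    rcases eq_or_ne i t with rfl | hit
    · rw [Pi.sub_apply, Pi.single_eq_same, Pi.single_eq_of_ne hij, zero_sub, abs_neg,
        abs_of_pos (by positivity), div_le_iff₀ hxt, mul_comm]
      exact min_le_right _ _
    · simp [hij, hit, hy₀ i]
  · rw [dotProduct_sub, dotProduct_single, dotProduct_single, mul_div_cancel₀ _ hxj.ne',
      mul_div_cancel₀ _ hxt.ne', sub_self, abs_zero]
    linarith

theorem snd_eq_div (hr : 0 ≤ r)
    (hp : (x, y) ∈ (convexHull ℝ (bilinearCoverSet r u)).extremePoints ℝ) {t : ι}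
    (ht : 0 < y t) (hy : ∀ j, j ≠ t → y j = 0) : y t = r / x t := by
  obtain ⟨-, hy₀, -, hxy⟩ := mem_iff.1 (extremePoints_convexHull_subset hp)
  have hxt := fst_pos_of_snd_pos hp ht
  have hdot : x ⬝ᵥ y = x t * y t := Fintype.sum_eq_single t fun j hj => by simp [hy j hj]
  have hrt : r / x t ≤ y t := by
    rw [div_le_iff₀ hxt, mul_comm, ← hdot]
    exact hxy
  have hw := eq_zero_of_abs_le_snd hp (w := Pi.single t (y t - r / x t)) (fun i => ?_) ?_
  · simpa [sub_eq_zero] using congrFun hw t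
  · rcases eq_or_ne i t with rfl | hit
    · rw [Pi.single_eq_same, abs_le]
      constructor <;> linarith [div_nonneg hr hxt.le]
    · simp [hit, hy₀ i]
  · rw [dotProduct_single, hdot, mul_sub, mul_div_cancel₀ _ hxt.ne']
    exact (abs_of_nonneg (by linarith)).le

theorem fst_eq_zero_or_eq_of_snd_eq_zero
    (hp : (x, y) ∈ (convexHull ℝ (bilinearCoverSet r u)).extremePoints ℝ) {j : ι}
    (hy : y j = 0) : x j = 0 ∨ x j = u j := by
  have h := extremePoints_convexHull_subset hp
  obtain ⟨hint, -, hxu, -⟩ := mem_iff.1 h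
  obtain ⟨m, hm⟩ := hint j
  have hmu : m ≤ u j := by exact_mod_cast hm ▸ hxu j
  by_contra! hne
  have hm0 : 0 < m := Nat.pos_of_ne_zero fun h0 => hne.1 (by simp [hm, h0])
  have hmu : m < u j := hmu.lt_of_ne fun h1 => hne.2 (by simp [hm, h1])
  have hadd := add_fst_single_mem h hy (c := 1) ⟨m + 1, by push_cast [hm]; ring⟩
    (by rw [hm]; exact_mod_cast hmu)
  have hsub := add_fst_single_mem h hy (c := -1) ⟨m - 1, by push_cast [hm, Nat.cast_sub hm0]; ring⟩
    (by rw [hm]; linarith [(Nat.cast_le (α := ℝ)).2 hmu.le])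
  have := eq_zero_of_add_mem_of_sub_mem_of_mem_extremePoints (v := (Pi.single j 1, 0)) hp
    (subset_convexHull ℝ _ (by simpa using hadd))
    (subset_convexHull ℝ _ (by simpa [sub_eq_add_neg, Pi.single_neg] using hsub))
  simpa using congrFun (congrArg Prod.fst this) j

end bilinearCoverSet

open bilinearCoverSet in
theorem stmt_7_general (n : ℕ) (r : ℝ) (hr : 0 < r)
    (u : Fin n → ℕ)
    (SU : Set ((Fin n → ℝ) × (Fin n → ℝ)))
    (hSU : SU = {p | (∀ i, ∃ m : ℕ, p.1 i = (m : ℝ)) ∧ (∀ i, 0 ≤ p.2 i) ∧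
      (∀ i, p.1 i ≤ (u i : ℝ)) ∧ r ≤ ∑ i, p.1 i * p.2 i})
    (p : (Fin n → ℝ) × (Fin n → ℝ))
    (hp : p ∈ (convexHull ℝ SU).extremePoints ℝ) :
    ∃ (t : Fin n) (pt : ℕ), 1 ≤ pt ∧ pt ≤ u t ∧
      p.1 t = (pt : ℝ) ∧ p.2 t = r / (pt : ℝ) ∧
      ∀ j, j ≠ t → (p.1 j = 0 ∨ p.1 j = (u j : ℝ)) ∧ p.2 j = 0 := by
  obtain ⟨x, y⟩ := p
  subst hSU
  replace hp : (x, y) ∈ (convexHull ℝ (bilinearCoverSet r u)).extremePoints ℝ := hp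
  have hmem := extremePoints_convexHull_subset hp
  obtain ⟨hint, -, hxu, -⟩ := mem_iff.1 hmem
  obtain ⟨t, ht⟩ := exists_snd_pos hr hmem
  have hy : ∀ j, j ≠ t → y j = 0 := fun j hj => snd_eq_zero_of_ne hp ht hj
  obtain ⟨pt, hpt⟩ := hint t
  have hpt_pos : (0 : ℝ) < pt := hpt ▸ fst_pos_of_snd_pos hp ht
  refine ⟨t, pt, by exact_mod_cast hpt_pos, by exact_mod_cast hpt ▸ hxu t, hpt,
    hpt ▸ snd_eq_div hr.le hp ht hy, fun j hj => ⟨?_, hy j hj⟩⟩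
  exact fst_eq_zero_or_eq_of_snd_eq_zero hp (hy j hj)

theorem stmt_7 (n : ℕ) (hn : 1 ≤ n) (r : ℝ) (hr : 0 < r)
    (u : Fin n → ℕ) (hu : ∀ i, 1 ≤ u i)
    (SU : Set ((Fin n → ℝ) × (Fin n → ℝ)))
    (hSU : SU = {p | (∀ i, ∃ m : ℕ, p.1 i = (m : ℝ)) ∧ (∀ i, 0 ≤ p.2 i) ∧
      (∀ i, p.1 i ≤ (u i : ℝ)) ∧ r ≤ ∑ i, p.1 i * p.2 i})
    (p : (Fin n → ℝ) × (Fin n → ℝ))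
    (hp : p ∈ (convexHull ℝ SU).extremePoints ℝ) :
    ∃ (t : Fin n) (pt : ℕ), 1 ≤ pt ∧ pt ≤ u t ∧
      p.1 t = (pt : ℝ) ∧ p.2 t = r / (pt : ℝ) ∧
      ∀ j, j ≠ t → (p.1 j = 0 ∨ p.1 j = (u j : ℝ)) ∧ p.2 j = 0 :=
  stmt_7_general n r hr u SU hSU p hp
end

section
/- The recession cone of conv(S^U) equals {(x,y) ∈ ℝ^n × ℝ^n : x = 0, y ≥ 0}. -/
/-!
Every point of `S^U` lies in the box `0 ≤ x ≤ u`, `y ≥ 0`, which is convex and therefore contains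
`conv(S^U)`. Moving from a point of `conv(S^U)` along a recession direction `(dx, dy)` stays in this
box forever, so `dx` is both nonnegative and nonpositive and `dy` is nonnegative. Conversely,
increasing `y` keeps `x` integral and bounded and can only increase `Σ xᵢ yᵢ` because `x ≥ 0`, so
every `(0, dy)` with `dy ≥ 0` is a recession direction of `S^U`, and hence of its convex hull.
-/

open Set
open scoped Pointwise

def recessionCone (𝕜 : Type*) {E : Type*} [Semiring 𝕜] [PartialOrder 𝕜] [AddCommMonoid E]
    [Module 𝕜 E] (K : Set E) : Set E :=
  {d | ∀ p ∈ K, ∀ t : 𝕜, 0 ≤ t → p + t • d ∈ K}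

theorem recessionCone_subset_recessionCone_convexHull {𝕜 E : Type*} [Ring 𝕜] [PartialOrder 𝕜]
    [AddCommGroup E] [Module 𝕜 E] (s : Set E) :
    recessionCone 𝕜 s ⊆ recessionCone 𝕜 (convexHull 𝕜 s) := by
  intro d hd p hp t ht
  have htranslate : t • d +ᵥ s ⊆ s := by
    rintro _ ⟨q, hq, rfl⟩
    simpa [vadd_eq_add, add_comm] using hd q hq t ht
  have hmem : p + t • d ∈ convexHull 𝕜 (t • d +ᵥ s) := by
    rw [convexHull_vadd, add_comm]
    exact vadd_mem_vadd_set hp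
  exact convexHull_mono htranslate hmem

theorem nonneg_of_forall_le_add_mul {𝕜 : Type*} [Field 𝕜] [LinearOrder 𝕜] [IsStrictOrderedRing 𝕜]
    {a b c : 𝕜} (h : ∀ t, 0 ≤ t → c ≤ a + t * b) : 0 ≤ b := by
  by_contra! hb
  have hca : c ≤ a := by simpa using h 0 le_rfl
  have hfar := h ((a - c + 1) / -b) (div_nonneg (by linarith) (by linarith))
  have hcancel : (a - c + 1) / -b * b = -(a - c + 1) := by field_simp [hb.ne]
  linarith

theorem nonpos_of_forall_add_mul_le {𝕜 : Type*} [Field 𝕜] [LinearOrder 𝕜] [IsStrictOrderedRing 𝕜]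
    {a b c : 𝕜} (h : ∀ t, 0 ≤ t → a + t * b ≤ c) : b ≤ 0 := by
  have hneg := nonneg_of_forall_le_add_mul (a := -a) (b := -b) (c := -c) fun t ht => by
    linarith [h t ht]
  linarith

section BoundedBilinearCoveringSet

variable {n : ℕ} (r : ℝ) (u : Fin n → ℕ)

/-- The set `S^U`, with the integer vector `x` stored as a real vector with natural-number entries. -/
def boundedBilinearCoveringSet : Set ((Fin n → ℝ) × (Fin n → ℝ)) :=
  {p | (∀ i, ∃ m : ℕ, p.1 i = (m : ℝ)) ∧ (∀ i, 0 ≤ p.2 i) ∧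
    (∀ i, p.1 i ≤ (u i : ℝ)) ∧ r ≤ ∑ i, p.1 i * p.2 i}

theorem convexHull_boundedBilinearCoveringSet_subset :
    convexHull ℝ (boundedBilinearCoveringSet r u) ⊆ Icc 0 (fun i => (u i : ℝ)) ×ˢ Ici 0 := by
  refine convexHull_min ?_ ((convex_Icc _ _).prod (convex_Ici _))
  rintro p ⟨hint, hy, hxu, -⟩
  refine ⟨⟨fun i => ?_, hxu⟩, hy⟩
  obtain ⟨m, hm⟩ := hint i
  exact hm ▸ m.cast_nonneg

variable {u}

theorem boundedBilinearCoveringSet_nonempty (hu : ∀ i, 1 ≤ u i) (i₀ : Fin n) :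
    (boundedBilinearCoveringSet r u).Nonempty := by
  refine ⟨(fun i => (u i : ℝ), fun _ => |r|), fun i => ⟨u i, rfl⟩, fun _ => abs_nonneg r,
    fun _ => le_rfl, ?_⟩
  calc r ≤ |r| := le_abs_self r
    _ ≤ (u i₀ : ℝ) * |r| := le_mul_of_one_le_left (abs_nonneg r) (by exact_mod_cast hu i₀)
    _ ≤ ∑ i, (u i : ℝ) * |r| :=
      Finset.single_le_sum (f := fun i => (u i : ℝ) * |r|) (fun i _ => by positivity)
        (Finset.mem_univ i₀)

theorem zero_prod_mem_recessionCone_boundedBilinearCoveringSet {e : Fin n → ℝ} (he : 0 ≤ e) :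
    ((0, e) : (Fin n → ℝ) × (Fin n → ℝ)) ∈ recessionCone ℝ (boundedBilinearCoveringSet r u) := by
  rintro p ⟨hint, hy, hxu, hr⟩ t ht
  have hte : 0 ≤ t • e := smul_nonneg ht he
  refine ⟨by simpa using hint, fun i => ?_, by simpa using hxu, hr.trans ?_⟩
  · simpa using add_nonneg (hy i) (hte i)
  · refine Finset.sum_le_sum fun i _ => ?_
    obtain ⟨m, hm⟩ := hint i
    simpa using mul_le_mul_of_nonneg_left (le_add_of_nonneg_right (hte i)) (hm ▸ m.cast_nonneg)

theorem eq_zero_and_nonneg_of_mem_recessionCone_convexHull (hu : ∀ i, 1 ≤ u i)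
    {d : (Fin n → ℝ) × (Fin n → ℝ)}
    (hd : d ∈ recessionCone ℝ (convexHull ℝ (boundedBilinearCoveringSet r u))) (i : Fin n) :
    d.1 i = 0 ∧ 0 ≤ d.2 i := by
  obtain ⟨p, hp⟩ := (boundedBilinearCoveringSet_nonempty r hu i).convexHull (𝕜 := ℝ)
  have hbox (t : ℝ) (ht : 0 ≤ t) :
      (0 ≤ p.1 i + t * d.1 i ∧ p.1 i + t * d.1 i ≤ u i) ∧ 0 ≤ p.2 i + t * d.2 i := by
    obtain ⟨⟨hx0, hxu⟩, hy⟩ := convexHull_boundedBilinearCoveringSet_subset r u (hd p hp t ht)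
    exact ⟨⟨hx0 i, hxu i⟩, hy i⟩
  exact ⟨le_antisymm (nonpos_of_forall_add_mul_le fun t ht => (hbox t ht).1.2)
      (nonneg_of_forall_le_add_mul fun t ht => (hbox t ht).1.1),
    nonneg_of_forall_le_add_mul fun t ht => (hbox t ht).2⟩

end BoundedBilinearCoveringSet

theorem stmt_10_general (n : ℕ) (r : ℝ)
    (u : Fin n → ℕ) (hu : ∀ i, 1 ≤ u i)
    (SU : Set ((Fin n → ℝ) × (Fin n → ℝ)))
    (hSU : SU = {p | (∀ i, ∃ m : ℕ, p.1 i = (m : ℝ)) ∧ (∀ i, 0 ≤ p.2 i) ∧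
      (∀ i, p.1 i ≤ (u i : ℝ)) ∧ r ≤ ∑ i, p.1 i * p.2 i}) :
    {d : (Fin n → ℝ) × (Fin n → ℝ) |
        ∀ p ∈ convexHull ℝ SU, ∀ t : ℝ, 0 ≤ t → p + t • d ∈ convexHull ℝ SU}
      = {d | (∀ i, d.1 i = 0) ∧ ∀ i, 0 ≤ d.2 i} := by
  change recessionCone ℝ (convexHull ℝ SU) = _
  subst hSU
  ext d
  constructor
  · intro hd
    exact ⟨fun i => (eq_zero_and_nonneg_of_mem_recessionCone_convexHull r hu hd i).1,
      fun i => (eq_zero_and_nonneg_of_mem_recessionCone_convexHull r hu hd i).2⟩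
  · rintro ⟨hd₁, hd₂⟩
    rw [show d = (0, d.2) from Prod.ext (funext hd₁) rfl]
    exact recessionCone_subset_recessionCone_convexHull _
      (zero_prod_mem_recessionCone_boundedBilinearCoveringSet r hd₂)

theorem stmt_10 (n : ℕ) (hn : 1 ≤ n) (r : ℝ) (hr : 0 < r)
    (u : Fin n → ℕ) (hu : ∀ i, 1 ≤ u i)
    (SU : Set ((Fin n → ℝ) × (Fin n → ℝ)))
    (hSU : SU = {p | (∀ i, ∃ m : ℕ, p.1 i = (m : ℝ)) ∧ (∀ i, 0 ≤ p.2 i) ∧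
      (∀ i, p.1 i ≤ (u i : ℝ)) ∧ r ≤ ∑ i, p.1 i * p.2 i}) :
    {d : (Fin n → ℝ) × (Fin n → ℝ) |
        ∀ p ∈ convexHull ℝ SU, ∀ t : ℝ, 0 ≤ t → p + t • d ∈ convexHull ℝ SU}
      = {d | (∀ i, d.1 i = 0) ∧ ∀ i, 0 ≤ d.2 i} :=
  stmt_10_general n r u hu SU hSU
end

section
/- For S^L = ∪_i S^L_i, a point (x̄,ȳ) is an extreme point of conv(S^L) if and only if it is an extreme point of conv(S^L_i) for some i. In particular, every extreme point of conv(S^L) has the form x̄_i = p, ȳ_i = r/p for some i and some integer p ∈ {1,...,u_i}, with all other coordinates zero. -/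
/-!
Each piece `S^L_i` is the image, under the embedding of the plane as the `i`-th pair of
coordinates, of `H = {(a, b) : a ∈ ℕ, 0 ≤ b, r ≤ a b, r / u_i ≤ b}`. Let `S^L_i ⊆ A ⊆ S^L`.
An extreme point of `conv A` lying in `S^L_i` comes from an extreme point of `H`, and
perturbing along `(1, 0)` and `(0, 1)` inside `H` forces it to be `(k, r / k)` with
`1 ≤ k ≤ u_i`. Conversely, such a point is the unique minimiser over all of `S^L` of a linear
functional (by AM-GM on the `i`-th plane), so it is extreme in `conv A`. Taking `A = S^L` and
`A = S^L_i` gives both statements.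
-/

open Set

section ExtremePoints

variable {𝕜 E F : Type*} [Field 𝕜] [LinearOrder 𝕜] [IsStrictOrderedRing 𝕜]
  [AddCommGroup E] [Module 𝕜 E] [AddCommGroup F] [Module 𝕜 F]

theorem eq_zero_of_mem_extremePoints_of_add_mem_of_sub_mem {A : Set E} {x v : E}
    (hx : x ∈ A.extremePoints 𝕜) (hadd : x + v ∈ A) (hsub : x - v ∈ A) : v = 0 := by
  have hseg : x ∈ openSegment 𝕜 (x + v) (x - v) :=
    ⟨1 / 2, 1 / 2, by norm_num, by norm_num, add_halves 1, by
      rw [← smul_add, add_add_sub_cancel, ← two_smul 𝕜 x, smul_smul]; norm_num⟩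
  simpa using hx.2 hadd hsub hseg

theorem mem_extremePoints_of_injective_of_map_mem_extremePoints {f : E →ₗ[𝕜] F}
    (hf : Function.Injective f) {s : Set E} {B : Set F} (hsB : f '' s ⊆ B) {x : E} (hx : x ∈ s)
    (hfx : f x ∈ B.extremePoints 𝕜) : x ∈ s.extremePoints 𝕜 := by
  refine ⟨hx, fun x₁ h₁ x₂ h₂ hseg => hf (hfx.2 (hsB (mem_image_of_mem f h₁))
    (hsB (mem_image_of_mem f h₂)) ?_)⟩
  simpa using (image_openSegment 𝕜 f.toAffineMap x₁ x₂).subset (mem_image_of_mem _ hseg)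

theorem mem_extremePoints_convexHull_of_forall_lt {s : Set E} {x : E} (f : E →ₗ[𝕜] 𝕜)
    (hx : x ∈ s) (hlt : ∀ y ∈ s, y ≠ x → f x < f y) : x ∈ (convexHull 𝕜 s).extremePoints 𝕜 := by
  have hconv : Convex 𝕜 (insert x {y | f x < f y}) := by
    refine convex_iff_forall_pos.2 fun y₁ h₁ y₂ h₂ a b ha hb hab => ?_
    obtain rfl : b = 1 - a := by linarith
    rcases h₁ with rfl | h₁ <;> rcases h₂ with rfl | h₂
    · exact .inl (Convex.combo_self hab _)
    all_goals
      refine .inr ?_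
      simp only [mem_ofPred_eq, map_add, map_smul, smul_eq_mul] at *
      nlinarith
  have hsub : convexHull 𝕜 s ⊆ insert x {y | f x < f y} :=
    convexHull_min (fun y hy => (eq_or_ne y x).imp id (hlt y hy)) hconv
  refine ⟨subset_convexHull 𝕜 s hx, fun y₁ h₁ y₂ h₂ hseg => ?_⟩
  by_contra hne
  have h₁ : f x < f y₁ := (hsub h₁).resolve_left hne
  have h₂ : f x ≤ f y₂ := (hsub h₂).elim (fun h => h ▸ le_rfl) le_of_lt
  obtain ⟨a, b, ha, hb, hab, rfl⟩ := hseg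
  obtain rfl : b = 1 - a := by linarith
  rw [map_add, map_smul, map_smul, smul_eq_mul, smul_eq_mul] at h₁ h₂
  nlinarith

end ExtremePoints

section CoordinatePlanes

variable {ι : Type*} [DecidableEq ι]

def embedPlane (i : ι) : ℝ × ℝ →ₗ[ℝ] (ι → ℝ) × (ι → ℝ) :=
  (LinearMap.single ℝ (fun _ => ℝ) i).prodMap (LinearMap.single ℝ (fun _ => ℝ) i)

@[simp]
theorem embedPlane_apply (i : ι) (q : ℝ × ℝ) :
    embedPlane i q = (Pi.single i q.1, Pi.single i q.2) :=
  rfl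

theorem embedPlane_injective (i : ι) : Function.Injective (embedPlane (ι := ι) i) := by
  intro q q' h
  simp only [embedPlane_apply, Prod.mk.injEq, Pi.single_inj] at h
  exact Prod.ext h.1 h.2

theorem setOf_eq_image_embedPlane (i : ι) (T : Set (ℝ × ℝ)) :
    {p : (ι → ℝ) × (ι → ℝ) | (p.1 i, p.2 i) ∈ T ∧ ∀ j, j ≠ i → p.1 j = 0 ∧ p.2 j = 0} =
      embedPlane i '' T := by
  ext p
  constructor
  · rintro ⟨hT, hzero⟩
    refine ⟨_, hT, Prod.ext (funext fun j => ?_) (funext fun j => ?_)⟩ <;>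
      rcases eq_or_ne j i with rfl | hj <;> simp [*]
  · rintro ⟨q, hq, rfl⟩
    exact ⟨by simpa using hq, fun j hj => by simp [hj]⟩

end CoordinatePlanes

def hyperbolicSet (r : ℝ) (u : ℕ) : Set (ℝ × ℝ) :=
  {q | (∃ m : ℕ, q.1 = m) ∧ 0 ≤ q.2 ∧ r ≤ q.1 * q.2 ∧ r / u ≤ q.2}

section HyperbolicSet

variable {r : ℝ} {u : ℕ}

theorem exists_nat_of_mem_hyperbolicSet (hr : 0 < r) {q : ℝ × ℝ} (hq : q ∈ hyperbolicSet r u) :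
    ∃ m : ℕ, 1 ≤ m ∧ q.1 = m := by
  obtain ⟨⟨m, hm⟩, -, hprod, -⟩ := hq
  refine ⟨m, Nat.one_le_iff_ne_zero.2 fun h0 => ?_, hm⟩
  rw [hm, h0, Nat.cast_zero, zero_mul] at hprod
  exact hprod.not_gt hr

theorem le_of_mem_extremePoints_hyperbolicSet (hu : 1 ≤ u) {m : ℕ} {y : ℝ}
    (hq : ((m : ℝ), y) ∈ (hyperbolicSet r u).extremePoints ℝ) : m ≤ u := by
  by_contra! hum
  obtain ⟨-, hy, hprod, hyu⟩ := hq.1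
  have hu' : (1 : ℝ) ≤ u := by exact_mod_cast hu
  have hum' : (u : ℝ) + 1 ≤ m := by exact_mod_cast hum
  have hadd : ((m : ℝ), y) + (1, 0) ∈ hyperbolicSet r u := by
    refine ⟨⟨m + 1, by push_cast; simp⟩, ?_, ?_, ?_⟩ <;> simp only [Prod.mk_add_mk, add_zero]
    · exact hy
    · nlinarith
    · exact hyu
  have hsub : ((m : ℝ), y) - (1, 0) ∈ hyperbolicSet r u := by
    refine ⟨⟨m - 1, by push_cast [Nat.cast_sub (by omega : 1 ≤ m)]; simp⟩, by simpa using hy,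
      ?_, by simpa using hyu⟩
    -- `(m - 1) y ≥ u y ≥ u (r / u) = r`
    have hur : (u : ℝ) * (r / u) = r := mul_div_cancel₀ r (by positivity)
    simp only [Prod.mk_sub_mk, sub_zero]
    nlinarith [mul_le_mul_of_nonneg_left hyu (by positivity : (0 : ℝ) ≤ u)]
  simpa using eq_zero_of_mem_extremePoints_of_add_mem_of_sub_mem hq hadd hsub

theorem eq_div_of_mem_extremePoints_hyperbolicSet (hr : 0 ≤ r) {m : ℕ} (hm : 1 ≤ m) (hmu : m ≤ u)
    {y : ℝ} (hq : ((m : ℝ), y) ∈ (hyperbolicSet r u).extremePoints ℝ) : y = r / m := by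
  obtain ⟨-, hy, hprod, hyu⟩ := hq.1
  have hm' : (0 : ℝ) < m := by exact_mod_cast hm
  have hrm : r / m ≤ y := by rw [div_le_iff₀ hm']; linarith
  have hadd : ((m : ℝ), y) + (0, y - r / m) ∈ hyperbolicSet r u := by
    refine ⟨⟨m, by simp⟩, ?_, ?_, ?_⟩ <;> simp only [Prod.mk_add_mk, add_zero]
    · linarith
    · nlinarith
    · linarith
  have hsub : ((m : ℝ), y) - (0, y - r / m) ∈ hyperbolicSet r u := by
    refine ⟨⟨m, by simp⟩, ?_, ?_, ?_⟩ <;> simp only [Prod.mk_sub_mk, sub_zero, sub_sub_cancel]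
    · positivity
    · rw [mul_div_cancel₀ r hm'.ne']
    · exact div_le_div_of_nonneg_left hr hm' (by exact_mod_cast hmu)
  have := eq_zero_of_mem_extremePoints_of_add_mem_of_sub_mem hq hadd hsub
  simp only [Prod.mk_eq_zero, true_and, sub_eq_zero] at this
  exact this

theorem exists_eq_of_mem_extremePoints_hyperbolicSet (hr : 0 < r) (hu : 1 ≤ u) {q : ℝ × ℝ}
    (hq : q ∈ (hyperbolicSet r u).extremePoints ℝ) :
    ∃ k : ℕ, 1 ≤ k ∧ k ≤ u ∧ q = ((k : ℝ), r / k) := by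
  obtain ⟨m, hm, hqm⟩ := exists_nat_of_mem_hyperbolicSet hr hq.1
  obtain ⟨x, y⟩ := q
  obtain rfl : x = m := hqm
  have hmu := le_of_mem_extremePoints_hyperbolicSet hu hq
  exact ⟨m, hm, hmu, by rw [eq_div_of_mem_extremePoints_hyperbolicSet hr.le hm hmu hq]⟩

end HyperbolicSet

theorem two_mul_lt_add_of_ne {r k a b : ℝ} (hr : 0 < r) (ha : 0 < a) (hab : r ≤ a * b)
    (hne : (a, b) ≠ (k, r / k)) : 2 * k < a + k ^ 2 / r * b := by
  rcases eq_or_ne a k with rfl | hak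
  · have hb : r / a < b := by
      rw [div_lt_iff₀ ha]
      exact lt_of_le_of_ne (by linarith) fun h => hne (by rw [h, mul_div_cancel_right₀ b ha.ne'])
    have : a < a ^ 2 / r * b := by
      calc a = a ^ 2 / r * (r / a) := by field_simp
        _ < a ^ 2 / r * b := by gcongr
    linarith
  · have : a ^ 2 + k ^ 2 ≤ a * (a + k ^ 2 / r * b) := by
      have : k ^ 2 ≤ k ^ 2 / r * (a * b) := by
        rw [div_mul_eq_mul_div, le_div_iff₀ hr]; nlinarith
      nlinarith
    have : 0 < (a - k) ^ 2 := sq_pos_of_ne_zero (sub_ne_zero.2 hak)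
    nlinarith

section Exposing

variable {ι : Type*} [DecidableEq ι] {r : ℝ} {u : ι → ℕ} {A : Set ((ι → ℝ) × (ι → ℝ))}

theorem exists_eq_of_embedPlane_mem_extremePoints_convexHull (hr : 0 < r) {i : ι} (hu : 1 ≤ u i)
    (hAi : embedPlane i '' hyperbolicSet r (u i) ⊆ A) {q : ℝ × ℝ} (hq : q ∈ hyperbolicSet r (u i))
    (h : embedPlane i q ∈ (convexHull ℝ A).extremePoints ℝ) :
    ∃ k : ℕ, 1 ≤ k ∧ k ≤ u i ∧ q = ((k : ℝ), r / k) :=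
  exists_eq_of_mem_extremePoints_hyperbolicSet hr hu <|
    mem_extremePoints_of_injective_of_map_mem_extremePoints (embedPlane_injective i)
      (hAi.trans (subset_convexHull ℝ A)) hq h

variable [Fintype ι]

-- On the `i`-th plane it is `a + k²b/r ≥ a + k²/a ≥ 2k` (AM-GM), with equality only at `(k, r/k)`;
-- on the other planes it is `(2k + 1) a > 2k`, since `a ≥ 1` there.
noncomputable def exposingFunctional (r k : ℝ) (i : ι) : (ι → ℝ) × (ι → ℝ) →ₗ[ℝ] ℝ :=
  (Fintype.linearCombination ℝ (Function.update (fun _ => 2 * k + 1) i 1)).coprod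
    (Fintype.linearCombination ℝ (Pi.single i (k ^ 2 / r)))

theorem exposingFunctional_embedPlane_self (r k : ℝ) (i : ι) (q : ℝ × ℝ) :
    exposingFunctional r k i (embedPlane i q) = q.1 + k ^ 2 / r * q.2 := by
  simp [exposingFunctional, Fintype.linearCombination_apply_single, mul_comm]

theorem exposingFunctional_embedPlane_of_ne (r k : ℝ) {i j : ι} (hj : j ≠ i) (q : ℝ × ℝ) :
    exposingFunctional r k i (embedPlane j q) = (2 * k + 1) * q.1 := by
  simp [exposingFunctional, Fintype.linearCombination_apply_single, hj, mul_comm]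

theorem embedPlane_mem_extremePoints_convexHull (hr : 0 < r)
    (hA : A ⊆ ⋃ j, embedPlane j '' hyperbolicSet r (u j)) {i : ι} {k : ℕ} (hk : 1 ≤ k)
    (hkA : embedPlane i ((k : ℝ), r / k) ∈ A) :
    embedPlane i ((k : ℝ), r / k) ∈ (convexHull ℝ A).extremePoints ℝ := by
  have hk' : (1 : ℝ) ≤ k := by exact_mod_cast hk
  have hval : exposingFunctional r k i (embedPlane i ((k : ℝ), r / k)) = 2 * k := by
    rw [exposingFunctional_embedPlane_self]; field_simp; ring
  refine mem_extremePoints_convexHull_of_forall_lt (exposingFunctional r k i) hkA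
    fun z hz hne => ?_
  obtain ⟨j, q, hq, rfl⟩ : ∃ j, ∃ q ∈ hyperbolicSet r (u j), embedPlane j q = z := by
    simpa using hA hz
  obtain ⟨m, hm, hqm⟩ := exists_nat_of_mem_hyperbolicSet hr hq
  have hm' : (1 : ℝ) ≤ m := by exact_mod_cast hm
  rw [hval]
  rcases eq_or_ne j i with rfl | hji
  · rw [exposingFunctional_embedPlane_self]
    exact two_mul_lt_add_of_ne hr (by rw [hqm]; positivity) hq.2.2.1
      fun h => hne (by rw [← h])
  · rw [exposingFunctional_embedPlane_of_ne r k hji, hqm]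
    nlinarith

theorem embedPlane_mem_extremePoints_convexHull_iff (hr : 0 < r)
    (hA : A ⊆ ⋃ j, embedPlane j '' hyperbolicSet r (u j)) {i : ι} (hu : 1 ≤ u i)
    (hAi : embedPlane i '' hyperbolicSet r (u i) ⊆ A) {q : ℝ × ℝ}
    (hq : q ∈ hyperbolicSet r (u i)) :
    embedPlane i q ∈ (convexHull ℝ A).extremePoints ℝ ↔
      ∃ k : ℕ, 1 ≤ k ∧ k ≤ u i ∧ q = ((k : ℝ), r / k) := by
  refine ⟨exists_eq_of_embedPlane_mem_extremePoints_convexHull hr hu hAi hq, ?_⟩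
  rintro ⟨k, hk, -, rfl⟩
  exact embedPlane_mem_extremePoints_convexHull hr hA hk (hAi ⟨_, hq, rfl⟩)

end Exposing

theorem stmt_13_general (n : ℕ) (r : ℝ) (hr : 0 < r)
    (u : Fin n → ℕ) (hu : ∀ i, 1 ≤ u i)
    (SLi : Fin n → Set ((Fin n → ℝ) × (Fin n → ℝ)))
    (hSLi : ∀ i, SLi i = {p | (∃ m : ℕ, p.1 i = (m : ℝ)) ∧ 0 ≤ p.2 i ∧
      r ≤ p.1 i * p.2 i ∧ r / (u i : ℝ) ≤ p.2 i ∧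
      ∀ j, j ≠ i → p.1 j = 0 ∧ p.2 j = 0})
    (SL : Set ((Fin n → ℝ) × (Fin n → ℝ))) (hSL : SL = ⋃ i, SLi i)
    (p : (Fin n → ℝ) × (Fin n → ℝ)) :
    (p ∈ (convexHull ℝ SL).extremePoints ℝ ↔
      ∃ i, p ∈ (convexHull ℝ (SLi i)).extremePoints ℝ) ∧
    (p ∈ (convexHull ℝ SL).extremePoints ℝ →
      ∃ (i : Fin n) (q : ℕ), 1 ≤ q ∧ q ≤ u i ∧ p.1 i = (q : ℝ) ∧ p.2 i = r / (q : ℝ) ∧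
        ∀ j, j ≠ i → p.1 j = 0 ∧ p.2 j = 0) := by
  have hSLi' (i : Fin n) : SLi i = embedPlane i '' hyperbolicSet r (u i) := by
    rw [hSLi, ← setOf_eq_image_embedPlane]
    simp only [hyperbolicSet, mem_ofPred_eq, and_assoc]
  set P : Fin n → Set ((Fin n → ℝ) × (Fin n → ℝ)) := fun i => embedPlane i '' hyperbolicSet r (u i)
  obtain rfl : SLi = P := funext hSLi'
  subst hSL
  have hiff {A} (hA : A ⊆ ⋃ j, P j) {i} (hAi : P i ⊆ A) {q} (hq : q ∈ hyperbolicSet r (u i)) :=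
    embedPlane_mem_extremePoints_convexHull_iff hr hA (hu i) hAi hq
  have hmem (h : p ∈ (convexHull ℝ (⋃ j, P j)).extremePoints ℝ) :
      ∃ i, ∃ q ∈ hyperbolicSet r (u i), embedPlane i q = p := by
    simpa [P] using extremePoints_convexHull_subset h
  refine ⟨⟨fun h => ?_, fun ⟨i, h⟩ => ?_⟩, fun h => ?_⟩
  · obtain ⟨i, q, hq, rfl⟩ := hmem h
    exact ⟨i, (hiff (subset_iUnion P i) subset_rfl hq).2
      ((hiff subset_rfl (subset_iUnion P i) hq).1 h)⟩
  · obtain ⟨q, hq, rfl⟩ := extremePoints_convexHull_subset h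
    exact (hiff subset_rfl (subset_iUnion P i) hq).2 ((hiff (subset_iUnion P i) subset_rfl hq).1 h)
  · obtain ⟨i, q, hq, rfl⟩ := hmem h
    obtain ⟨k, hk, hku, rfl⟩ := (hiff subset_rfl (subset_iUnion P i) hq).1 h
    exact ⟨i, k, hk, hku, by simp, by simp, fun j hj => by simp [hj]⟩

theorem stmt_13 (n : ℕ) (hn : 1 ≤ n) (r : ℝ) (hr : 0 < r)
    (u : Fin n → ℕ) (hu : ∀ i, 1 ≤ u i)
    (SLi : Fin n → Set ((Fin n → ℝ) × (Fin n → ℝ)))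
    (hSLi : ∀ i, SLi i = {p | (∃ m : ℕ, p.1 i = (m : ℝ)) ∧ 0 ≤ p.2 i ∧
      r ≤ p.1 i * p.2 i ∧ r / (u i : ℝ) ≤ p.2 i ∧
      ∀ j, j ≠ i → p.1 j = 0 ∧ p.2 j = 0})
    (SL : Set ((Fin n → ℝ) × (Fin n → ℝ))) (hSL : SL = ⋃ i, SLi i)
    (p : (Fin n → ℝ) × (Fin n → ℝ)) :
    (p ∈ (convexHull ℝ SL).extremePoints ℝ ↔
      ∃ i, p ∈ (convexHull ℝ (SLi i)).extremePoints ℝ) ∧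
    (p ∈ (convexHull ℝ SL).extremePoints ℝ →
      ∃ (i : Fin n) (q : ℕ), 1 ≤ q ∧ q ≤ u i ∧ p.1 i = (q : ℝ) ∧ p.2 i = r / (q : ℝ) ∧
        ∀ j, j ≠ i → p.1 j = 0 ∧ p.2 j = 0) :=
  stmt_13_general n r hr u hu SLi hSLi SL hSL p
end
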